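/- Let l > 0, ε > 0, x* ∈ ℝ with |x*| < l − 3ε, p* ∈ ℝ, ħ > 0, and let ψ_β be the truncated-Gaussian state. Then the second position moment satisfies Δ*x_β² = β² + O(β·e^{−(l−|x*|−3ε)²/(2β²)}) as β → 0⁺. -/

import Mathlib

open Real MeasureTheory Filter Asymptotics Topology

/-!
Write `g(x) = exp (-(x - x*)² / (2β²))` and `d = l - |x*| - 3ε`. Then `|ψ_β|² = K g η²`, the
normalisation fixes `K = 1 / ∫ g η²`, and `η = 1` on `[x* - d, x* + d]`, so
`Δ*x_β² - β² = (∫ ((x - x*)² - β²) g η²) / ∫ g η²`.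
Since `((x - x*)² - β²) g` is the derivative of `-β² (x - x*) g`, the numerator equals
`-2β² d g(x* ± d)` on `[x* - d, x* + d]`, and on each of the two tails (where the integrand is
nonnegative and `0 ≤ η² ≤ 1`) it lies between `0` and `β² d g(x* ± d)`. The denominator is at
least `2β e^{-1/2}`, already from `[x* - β, x* + β]` alone.
-/

noncomputable def bump (C ε x : ℝ) : ℝ :=
  if |x| < ε then C * exp (-ε / (ε - |x|)) else 0

theorem bump_nonneg {C ε : ℝ} (hC : 0 ≤ C) (x : ℝ) : 0 ≤ bump C ε x := by
  unfold bump
  split_ifs <;> positivity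

theorem bump_eq_zero_of_le_abs {C ε x : ℝ} (hx : ε ≤ |x|) : bump C ε x = 0 :=
  if_neg hx.not_gt

noncomputable def mollifiedIndicator (ω : ℝ → ℝ) (a b : ℝ) (x : ℝ) : ℝ :=
  ∫ y in Set.Icc a b, ω (x - y)

namespace mollifiedIndicator

variable {ω : ℝ → ℝ} {a b : ℝ}

theorem nonneg (hω : ∀ u, 0 ≤ ω u) (x : ℝ) : 0 ≤ mollifiedIndicator ω a b x :=
  setIntegral_nonneg measurableSet_Icc fun _ _ => hω _

theorem le_one (hω : ∀ u, 0 ≤ ω u) (hω_one : ∫ u, ω u = 1) (x : ℝ) :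
    mollifiedIndicator ω a b x ≤ 1 := by
  have hω_int : Integrable ω := Integrable.of_integral_ne_zero (by simp [hω_one])
  calc mollifiedIndicator ω a b x ≤ ∫ y, ω (x - y) :=
        setIntegral_le_integral ((integrable_comp_sub_left ω x).2 hω_int)
          (Eventually.of_forall fun _ => hω _)
    _ = 1 := by rw [integral_sub_left_eq_self ω volume x, hω_one]

theorem eq_one {ε : ℝ} (hω_one : ∫ u, ω u = 1) (hω_supp : ∀ u, ε ≤ |u| → ω u = 0) {x : ℝ}
    (hx : x ∈ Set.Icc (a + ε) (b - ε)) : mollifiedIndicator ω a b x = 1 := by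
  rw [mollifiedIndicator, setIntegral_eq_integral_of_forall_compl_eq_zero,
    integral_sub_left_eq_self ω volume x, hω_one]
  intro y hy
  apply hω_supp
  rw [Set.mem_Icc, not_and_or, not_le, not_le] at hy
  rw [le_abs']
  rcases hy with hy | hy
  · exact Or.inr (by linarith [hx.1])
  · exact Or.inl (by linarith [hx.2])

theorem continuous (hω : Integrable ω) (hab : a ≤ b) : Continuous (mollifiedIndicator ω a b) := by
  have hF : Continuous (fun t : ℝ => ∫ u in (0:ℝ)..t, ω u) := hω.continuous_primitive 0
  have hrepr : mollifiedIndicator ω a b =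
      fun x => (∫ u in (0:ℝ)..(x - a), ω u) - ∫ u in (0:ℝ)..(x - b), ω u := by
    funext x
    rw [mollifiedIndicator, integral_Icc_eq_integral_Ioc, ← intervalIntegral.integral_of_le hab,
      intervalIntegral.integral_comp_sub_left ω x,
      ← intervalIntegral.integral_interval_sub_left hω.intervalIntegrable hω.intervalIntegrable]
  rw [hrepr]
  exact (hF.comp (continuous_id.sub continuous_const)).sub
    (hF.comp (continuous_id.sub continuous_const))

end mollifiedIndicator

theorem intervalIntegral_mul_mem_Icc {f φ : ℝ → ℝ} {u v : ℝ} (hf : Continuous f)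
    (hφ : Continuous φ) (huv : u ≤ v) (hf_nonneg : ∀ x ∈ Set.Icc u v, 0 ≤ f x)
    (hφ_mem : ∀ x, φ x ∈ Set.Icc 0 1) :
    ∫ x in u..v, f x * φ x ∈ Set.Icc 0 (∫ x in u..v, f x) := by
  constructor
  · exact intervalIntegral.integral_nonneg huv fun x hx =>
      mul_nonneg (hf_nonneg x hx) (hφ_mem x).1
  · exact intervalIntegral.integral_mono_on huv ((hf.mul hφ).intervalIntegrable _ _)
      (hf.intervalIntegrable _ _) fun x hx =>
        mul_le_of_le_one_right (hf_nonneg x hx) (hφ_mem x).2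

section GaussianWeight

variable {β xs d : ℝ} {φ : ℝ → ℝ}

theorem hasDerivAt_mul_exp_neg_sq_div (hβ : β ≠ 0) (x : ℝ) :
    HasDerivAt (fun x => -β ^ 2 * (x - xs) * exp (-(x - xs) ^ 2 / (2 * β ^ 2)))
      (((x - xs) ^ 2 - β ^ 2) * exp (-(x - xs) ^ 2 / (2 * β ^ 2))) x := by
  have hlin : HasDerivAt (fun x : ℝ => x - xs) 1 x := (hasDerivAt_id x).sub_const xs
  refine ((hlin.const_mul (-β ^ 2)).mul
    ((hlin.pow 2).neg.div_const (2 * β ^ 2)).exp).congr_deriv ?_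
  simp only [Pi.neg_apply, Pi.pow_apply]
  field_simp
  ring

theorem integral_sq_sub_mul_exp_neg_sq_div (hβ : β ≠ 0) (u v : ℝ) :
    ∫ x in u..v, ((x - xs) ^ 2 - β ^ 2) * exp (-(x - xs) ^ 2 / (2 * β ^ 2)) =
      β ^ 2 * (u - xs) * exp (-(u - xs) ^ 2 / (2 * β ^ 2))
        - β ^ 2 * (v - xs) * exp (-(v - xs) ^ 2 / (2 * β ^ 2)) := by
  rw [intervalIntegral.integral_eq_sub_of_hasDerivAt
    (fun x _ => hasDerivAt_mul_exp_neg_sq_div hβ x)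
    (Continuous.intervalIntegrable (by fun_prop) u v)]
  ring

theorem two_mul_mul_exp_neg_half_le_intervalIntegral (hφ : Continuous φ)
    (hφ_nonneg : ∀ x, 0 ≤ φ x) (hφ_one : ∀ x ∈ Set.Icc (xs - β) (xs + β), φ x = 1)
    (hβ : 0 < β) {a b : ℝ} (ha : a ≤ xs - β) (hb : xs + β ≤ b) :
    2 * β * exp (-(1 / 2)) ≤ ∫ x in a..b, exp (-(x - xs) ^ 2 / (2 * β ^ 2)) * φ x := by
  have hcont : Continuous fun x => exp (-(x - xs) ^ 2 / (2 * β ^ 2)) * φ x := by fun_prop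
  calc 2 * β * exp (-(1 / 2)) = ∫ _ in (xs - β)..(xs + β), exp (-(1 / 2) : ℝ) := by
        simp only [intervalIntegral.integral_const, smul_eq_mul]
        ring
    _ ≤ ∫ x in (xs - β)..(xs + β), exp (-(x - xs) ^ 2 / (2 * β ^ 2)) * φ x := by
        refine intervalIntegral.integral_mono_on (by linarith) intervalIntegrable_const
          (hcont.intervalIntegrable _ _) fun x hx => ?_
        have hsq : (x - xs) ^ 2 ≤ β ^ 2 := sq_le_sq' (by linarith [hx.1]) (by linarith [hx.2])
        rw [hφ_one x hx, mul_one, exp_le_exp, le_div_iff₀ (by positivity)]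
        linarith
    _ ≤ ∫ x in a..b, exp (-(x - xs) ^ 2 / (2 * β ^ 2)) * φ x :=
        intervalIntegral.integral_mono_interval ha (by linarith) hb
          (Eventually.of_forall fun x => mul_nonneg (exp_pos _).le (hφ_nonneg x))
          (hcont.intervalIntegrable _ _)

theorem abs_intervalIntegral_sq_sub_mul_exp_mul_le (hφ : Continuous φ)
    (hφ_mem : ∀ x, φ x ∈ Set.Icc 0 1) (hφ_one : ∀ x ∈ Set.Icc (xs - d) (xs + d), φ x = 1)
    (hβ : 0 < β) (hβd : β ≤ d) {a b : ℝ} (ha : a ≤ xs - d) (hb : xs + d ≤ b) :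
    |∫ x in a..b, ((x - xs) ^ 2 - β ^ 2) * exp (-(x - xs) ^ 2 / (2 * β ^ 2)) * φ x|
      ≤ 2 * β ^ 2 * d * exp (-d ^ 2 / (2 * β ^ 2)) := by
  set f : ℝ → ℝ := fun x => ((x - xs) ^ 2 - β ^ 2) * exp (-(x - xs) ^ 2 / (2 * β ^ 2))
  have hf_cont : Continuous f := by fun_prop
  have hfφ_int : ∀ u v, IntervalIntegrable (fun x => f x * φ x) volume u v :=
    fun u v => (hf_cont.mul hφ).intervalIntegrable u v
  have hf_nonneg : ∀ x, d ≤ |x - xs| → 0 ≤ f x := by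
    intro x hx
    have hsq : β ^ 2 ≤ (x - xs) ^ 2 := sq_abs (x - xs) ▸ pow_le_pow_left₀ hβ.le (hβd.trans hx) 2
    exact mul_nonneg (sub_nonneg.2 hsq) (exp_pos _).le
  have hd : 0 ≤ d := hβ.le.trans hβd
  set E := exp (-d ^ 2 / (2 * β ^ 2))
  have hsplit : ∫ x in a..b, f x * φ x = (∫ x in a..(xs - d), f x * φ x)
      + (∫ x in (xs - d)..(xs + d), f x * φ x) + ∫ x in (xs + d)..b, f x * φ x := by
    rw [intervalIntegral.integral_add_adjacent_intervals (hfφ_int _ _) (hfφ_int _ _),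
      intervalIntegral.integral_add_adjacent_intervals (hfφ_int _ _) (hfφ_int _ _)]
  have hmid : ∫ x in (xs - d)..(xs + d), f x * φ x = -(2 * β ^ 2 * d * E) := by
    have hφ_eq_one : Set.EqOn (fun x => f x * φ x) f (Set.uIcc (xs - d) (xs + d)) := by
      rw [Set.uIcc_of_le (by linarith)]
      intro x hx
      simp only [hφ_one x hx, mul_one]
    rw [intervalIntegral.integral_congr hφ_eq_one, integral_sq_sub_mul_exp_neg_sq_div hβ.ne']
    simp only [E, sub_sub_cancel_left, add_sub_cancel_left, neg_sq]
    ring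
  have hleft := intervalIntegral_mul_mem_Icc hf_cont hφ ha
    (fun x hx => hf_nonneg x (by rw [abs_sub_comm, abs_of_nonneg] <;> linarith [hx.2])) hφ_mem
  have hright := intervalIntegral_mul_mem_Icc hf_cont hφ hb
    (fun x hx => hf_nonneg x (by rw [abs_of_nonneg] <;> linarith [hx.1])) hφ_mem
  rw [integral_sq_sub_mul_exp_neg_sq_div hβ.ne'] at hleft hright
  simp only [sub_sub_cancel_left, add_sub_cancel_left, neg_sq] at hleft hright
  have hleft_end : β ^ 2 * (a - xs) * exp (-(a - xs) ^ 2 / (2 * β ^ 2)) ≤ 0 :=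
    mul_nonpos_of_nonpos_of_nonneg (mul_nonpos_of_nonneg_of_nonpos (sq_nonneg β) (by linarith))
      (exp_pos _).le
  have hright_end : 0 ≤ β ^ 2 * (b - xs) * exp (-(b - xs) ^ 2 / (2 * β ^ 2)) :=
    mul_nonneg (mul_nonneg (sq_nonneg β) (by linarith)) (exp_pos _).le
  rw [hsplit, hmid, abs_le]
  constructor <;> linarith [hleft.1, hleft.2, hright.1, hright.2]

theorem abs_setIntegral_sq_mul_sub_sq_le (hφ : Continuous φ)
    (hφ_mem : ∀ x, φ x ∈ Set.Icc 0 1) (hφ_one : ∀ x ∈ Set.Icc (xs - d) (xs + d), φ x = 1)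
    (hβ : 0 < β) (hβd : β ≤ d) {a b : ℝ} (ha : a ≤ xs - d) (hb : xs + d ≤ b)
    {ρ : ℝ → ℝ} {K : ℝ} (hρ : ∀ x, ρ x = K * (exp (-(x - xs) ^ 2 / (2 * β ^ 2)) * φ x))
    (hρ_one : ∫ x in Set.Icc a b, ρ x = 1) :
    |(∫ x in Set.Icc a b, (x - xs) ^ 2 * ρ x) - β ^ 2|
      ≤ exp (1 / 2) * d * β * exp (-d ^ 2 / (2 * β ^ 2)) := by
  have hab : a ≤ b := by linarith [hβ.le.trans hβd]
  simp only [integral_Icc_eq_integral_Ioc, ← intervalIntegral.integral_of_le hab] at hρ_one ⊢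
  set w : ℝ → ℝ := fun x => exp (-(x - xs) ^ 2 / (2 * β ^ 2)) * φ x
  have hw : Continuous w := by fun_prop
  set I := ∫ x in a..b, w x
  have hI : 2 * β * exp (-(1 / 2)) ≤ I :=
    two_mul_mul_exp_neg_half_le_intervalIntegral hφ (fun x => (hφ_mem x).1)
      (fun x hx => hφ_one x ⟨by linarith [hx.1], by linarith [hx.2]⟩) hβ
      (by linarith) (by linarith)
  have hI_pos : 0 < I := lt_of_lt_of_le (by positivity) hI
  set J := ∫ x in a..b, ((x - xs) ^ 2 - β ^ 2) * exp (-(x - xs) ^ 2 / (2 * β ^ 2)) * φ x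
  have hJ : |J| ≤ 2 * β ^ 2 * d * exp (-d ^ 2 / (2 * β ^ 2)) :=
    abs_intervalIntegral_sq_sub_mul_exp_mul_le hφ hφ_mem hφ_one hβ hβd ha hb
  have hKI : K * I = 1 := by
    rw [← hρ_one, ← intervalIntegral.integral_const_mul]
    simp only [hρ, w]
  have hmoment : (∫ x in a..b, (x - xs) ^ 2 * ρ x) - β ^ 2 = J / I := by
    have hρ_moment : ∫ x in a..b, (x - xs) ^ 2 * ρ x = K * ∫ x in a..b, (x - xs) ^ 2 * w x := by
      rw [← intervalIntegral.integral_const_mul]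
      refine intervalIntegral.integral_congr fun x _ => ?_
      simp only [hρ, w]
      ring
    have hJ_eq : J = (∫ x in a..b, (x - xs) ^ 2 * w x) - β ^ 2 * I := by
      rw [← intervalIntegral.integral_const_mul, ← intervalIntegral.integral_sub
        ((by fun_prop : Continuous _).intervalIntegrable _ _)
        ((by fun_prop : Continuous _).intervalIntegrable _ _)]
      refine intervalIntegral.integral_congr fun x _ => ?_
      simp only [w]
      ring
    rw [eq_div_iff hI_pos.ne', hJ_eq, hρ_moment]
    linear_combination (∫ x in a..b, (x - xs) ^ 2 * w x) * hKI
  have hexp_half : exp (1 / 2) * exp (-(1 / 2)) = 1 := by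
    rw [← exp_add]
    norm_num
  have hd : 0 ≤ d := hβ.le.trans hβd
  rw [hmoment, abs_div, abs_of_pos hI_pos, div_le_iff₀ hI_pos]
  calc |J| ≤ 2 * β ^ 2 * d * exp (-d ^ 2 / (2 * β ^ 2)) := hJ
    _ = exp (1 / 2) * d * β * exp (-d ^ 2 / (2 * β ^ 2)) * (2 * β * exp (-(1 / 2))) := by
      linear_combination (-2 * β ^ 2 * d * exp (-d ^ 2 / (2 * β ^ 2))) * hexp_half
    _ ≤ exp (1 / 2) * d * β * exp (-d ^ 2 / (2 * β ^ 2)) * I :=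
      mul_le_mul_of_nonneg_left hI (by positivity)

end GaussianWeight

theorem norm_sq_ofReal_mul_exp_neg_sq_div_add_I_mul (A xs β x p h s : ℝ) :
    ‖(A : ℂ) * Complex.exp (-(((x - xs) ^ 2 / (4 * β ^ 2) : ℝ) : ℂ) + Complex.I * x * p / h) *
        (s : ℂ)‖ ^ 2 = A ^ 2 * (exp (-(x - xs) ^ 2 / (2 * β ^ 2)) * s ^ 2) := by
  have hphase : Complex.I * x * p / h = ((x * p / h : ℝ) : ℂ) * Complex.I := by
    push_cast
    ring
  rw [hphase, ← Complex.ofReal_neg, Complex.exp_add]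
  simp only [norm_mul, Complex.norm_exp_ofReal, Complex.norm_exp_ofReal_mul_I, Complex.norm_real,
    Real.norm_eq_abs, mul_one, mul_pow, sq_abs, ← exp_nat_mul]
  rw [mul_assoc]
  congr 3
  push_cast
  ring

theorem truncated_gaussian_position_moment_general
    (l ε xs ps hbar : ℝ) (hε : 0 < ε)
    (hxs : |xs| < l - 3 * ε)
    (C : ℝ) (hC : 0 < C) (ω : ℝ → ℝ)
    (hω : ω = fun x => if |x| < ε then C * Real.exp (-ε / (ε - |x|)) else 0)
    (hωint : ∫ x : ℝ, ω x = 1)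
    (η : ℝ → ℝ)
    (hη : η = fun x => ∫ y in Set.Icc (-l + 2 * ε) (l - 2 * ε), ω (x - y))
    (B : ℝ → ℝ)
    (ψ : ℝ → ℝ → ℂ)
    (hψ : ∀ β : ℝ, 0 < β → ψ β = fun x : ℝ =>
      (B β : ℂ) * (((2 * π * β ^ 2) ^ (-(1/4 : ℝ)) : ℝ) : ℂ) *
        Complex.exp (-(((x - xs) ^ 2 / (4 * β ^ 2) : ℝ) : ℂ) +
          Complex.I * (x : ℂ) * (ps : ℂ) / (hbar : ℂ)) * ((η x : ℝ) : ℂ))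
    (hnorm : ∀ β : ℝ, 0 < β → ∫ x in Set.Icc (-l) l, ‖ψ β x‖ ^ 2 = 1)
    :
    (fun β : ℝ => (∫ x in Set.Icc (-l) l, (x - xs) ^ 2 * ‖ψ β x‖ ^ 2) - β ^ 2) =O[𝓝[>] (0:ℝ)]
      (fun β : ℝ => β * Real.exp (-(l - |xs| - 3 * ε) ^ 2 / (2 * β ^ 2))) := by
  obtain rfl : ω = bump C ε := hω
  replace hη : η = mollifiedIndicator (bump C ε) (-l + 2 * ε) (l - 2 * ε) := hη
  set d := l - |xs| - 3 * ε
  have hd : 0 < d := by linarith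
  obtain ⟨hxs_lower, hxs_upper⟩ : -|xs| ≤ xs ∧ xs ≤ |xs| := abs_le.1 le_rfl
  have hω_int : Integrable (bump C ε) := Integrable.of_integral_ne_zero (by simp [hωint])
  have hη_cont : Continuous η := hη ▸ mollifiedIndicator.continuous hω_int (by linarith)
  have hη_sq_mem : ∀ x, η x ^ 2 ∈ Set.Icc 0 1 := fun x => by
    rw [hη]
    exact ⟨sq_nonneg _, pow_le_one₀ (mollifiedIndicator.nonneg (bump_nonneg hC.le) x)
      (mollifiedIndicator.le_one (bump_nonneg hC.le) hωint x)⟩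
  have hη_sq_one : ∀ x ∈ Set.Icc (xs - d) (xs + d), η x ^ 2 = 1 := fun x hx => by
    rw [hη, mollifiedIndicator.eq_one hωint (fun _ => bump_eq_zero_of_le_abs)
      ⟨by linarith [hx.1], by linarith [hx.2]⟩, one_pow]
  have hψ_sq : ∀ β, 0 < β → ∀ x, ‖ψ β x‖ ^ 2 = (B β * (2 * π * β ^ 2) ^ (-(1/4 : ℝ))) ^ 2 *
      (exp (-(x - xs) ^ 2 / (2 * β ^ 2)) * η x ^ 2) := fun β hβ x => by
    rw [hψ β hβ, ← Complex.ofReal_mul]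
    exact norm_sq_ofReal_mul_exp_neg_sq_div_add_I_mul _ _ _ _ _ _ _
  refine isBigO_iff.2 ⟨exp (1 / 2) * d, ?_⟩
  filter_upwards [Ioo_mem_nhdsGT hd] with β ⟨hβ, hβd⟩
  rw [norm_mul, norm_of_nonneg (exp_pos _).le, norm_of_nonneg hβ.le, Real.norm_eq_abs]
  exact (abs_setIntegral_sq_mul_sub_sq_le (hη_cont.pow 2) hη_sq_mem hη_sq_one hβ hβd.le
    (by linarith) (by linarith) (hψ_sq β hβ) (hnorm β hβ)).trans_eq (by ring)

/-- For the truncated-Gaussian states, the second position moment about `x*`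
satisfies `Δ*x_β² = β² + O(β·exp(-(l-|x*|-3ε)²/(2β²)))` as `β → 0⁺`. -/
theorem truncated_gaussian_position_moment
    (l ε xs ps hbar : ℝ) (hl : 0 < l) (hε : 0 < ε)
    (hxs : |xs| < l - 3 * ε) (hhbar : 0 < hbar)
    (C : ℝ) (hC : 0 < C) (ω : ℝ → ℝ)
    (hω : ω = fun x => if |x| < ε then C * Real.exp (-ε / (ε - |x|)) else 0)
    (hωint : ∫ x : ℝ, ω x = 1)
    (η : ℝ → ℝ)
    (hη : η = fun x => ∫ y in Set.Icc (-l + 2 * ε) (l - 2 * ε), ω (x - y))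
    (B : ℝ → ℝ) (hB : ∀ β : ℝ, 0 < β → 0 < B β)
    (ψ : ℝ → ℝ → ℂ)
    (hψ : ∀ β : ℝ, 0 < β → ψ β = fun x : ℝ =>
      (B β : ℂ) * (((2 * π * β ^ 2) ^ (-(1/4 : ℝ)) : ℝ) : ℂ) *
        Complex.exp (-(((x - xs) ^ 2 / (4 * β ^ 2) : ℝ) : ℂ) +
          Complex.I * (x : ℂ) * (ps : ℂ) / (hbar : ℂ)) * ((η x : ℝ) : ℂ))
    (hnorm : ∀ β : ℝ, 0 < β → ∫ x in Set.Icc (-l) l, ‖ψ β x‖ ^ 2 = 1)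
    :
    (fun β : ℝ => (∫ x in Set.Icc (-l) l, (x - xs) ^ 2 * ‖ψ β x‖ ^ 2) - β ^ 2) =O[𝓝[>] (0:ℝ)]
      (fun β : ℝ => β * Real.exp (-(l - |xs| - 3 * ε) ^ 2 / (2 * β ^ 2))) :=
  truncated_gaussian_position_moment_general l ε xs ps hbar hε hxs C hC ω hω hωint η hη B ψ hψ hnorm
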